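/- arXiv:1510.01891 — 2 statements merged into one kernel-verified Lean document; each statement's English description precedes it below -/
import Mathlib

section
/- Let ℙ be a 0/1 integer linear program min{ f(x) : x ∈ {0,1}^n, g_ℓ(x) ≥ 0 for ℓ ∈ [m] } with m ≥ 1 non-redundant affine-linear constraints and at least one integral feasible point, and let f(x_{I*}) denote its integral optimum. If there exists y feasible for Las_{n−1}(ℙ) with Σ_{I⊆N} y_I^N f(x_I) < f(x_{I*}), then every constraint g_ℓ(x) ≥ 0 of ℙ is a Single Vertex Cutting (SVC) constraint: there is exactly one I ⊆ N with g_ℓ(x_I) < 0, and g_ℓ(x_J) > 0 for every other J ⊆ N. -/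
open Finset Matrix

/-- Value of the affine-linear function `x ↦ ∑ i, a i * x i + b` at the 0/1 point `x_I`. -/
def gval {n : ℕ} (a : Fin n → ℝ) (b : ℝ) (I : Finset (Fin n)) : ℝ :=
  (∑ i ∈ I, a i) + b

/-- The shift operator: `(g∗y)_I = ∑ i, a i * y_{I ∪ {i}} + b * y_I`. -/
def shiftVec {n : ℕ} (a : Fin n → ℝ) (b : ℝ) (y : Finset (Fin n) → ℝ)
    (I : Finset (Fin n)) : ℝ :=
  (∑ i : Fin n, a i * y (insert i I)) + b * y I

/-- `y_I^N := ∑_{H ⊆ N \ I} (-1)^{|H|} y_{H ∪ I}`. -/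
def mob {n : ℕ} (w : Finset (Fin n) → ℝ) (I : Finset (Fin n)) : ℝ :=
  ∑ H ∈ (Finset.univ \ I).powerset, (-1 : ℝ) ^ H.card * w (H ∪ I)

/-- The index set `P_{n-1}(N)`: all subsets of `N = {1,...,n}` except `N` itself. -/
abbrev Idx (n : ℕ) := {I : Finset (Fin n) // I ≠ Finset.univ}

/-- The `(n-1)`-moment matrix of `w`, with `(I,J)`-entry `w_{I ∪ J}`. -/
def Mnm1 {n : ℕ} (w : Finset (Fin n) → ℝ) : Matrix (Idx n) (Idx n) ℝ :=
  Matrix.of fun I J => w (I.1 ∪ J.1)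

/-- The full `n`-moment matrix of `w`, indexed by all subsets of `N`. -/
def Mfull {n : ℕ} (w : Finset (Fin n) → ℝ) : Matrix (Finset (Fin n)) (Finset (Fin n)) ℝ :=
  Matrix.of fun I J => w (I ∪ J)

/-! The Möbius coefficients `λ_K := mob y K` diagonalize the moment matrices: `y_{I ∪ J}` is
the sum of `λ_T` over `T ⊇ I ∪ J`, so `vᵀ M(y) v = ∑_T λ_T (∑_{I ⊆ T} v_I)²`, and shifting by an
affine `g` multiplies them by the constraint values, `mob (g ∗ y) K = g(x_K) λ_K`.
Positive semidefiniteness of `M_n(y)` gives `λ ≥ 0` with `∑ λ = y_∅ = 1`, so a gap forces an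
infeasible `K₀` with `λ_{K₀} > 0`. The `(n-1)`-moment matrix only sees vectors with `v_N = 0`,
whose subset-sum transforms are exactly the `φ` with `∑_T (-1)^{|N \ T|} φ_T = 0`; testing it
with `φ = ±δ_{K₁} ± δ_{K₂}` gives `g(x_{K₁}) λ_{K₁} + g(x_{K₂}) λ_{K₂} ≥ 0` for all `K₁ ≠ K₂`.
Against `K₀` this makes every `λ_K` positive, and then a point violating `g_ℓ` forces `g_ℓ > 0`
at every other point. -/

section Alternating

variable {α R : Type*} [DecidableEq α] [Ring R]

omit [DecidableEq α] in
lemma neg_one_pow_sq (k : ℕ) : ((-1 : R) ^ k) ^ 2 = 1 := by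
  rw [← pow_mul, mul_comm, pow_mul, neg_one_sq, one_pow]

lemma sum_Icc_neg_one_pow_card_sdiff_left {S U : Finset α} (h : S ⊆ U) :
    ∑ T ∈ Icc S U, (-1 : R) ^ #(T \ S) = if S = U then 1 else 0 := by
  have hdisj : ∀ H ∈ (U \ S).powerset, Disjoint S H := fun H hH =>
    disjoint_of_subset_right (mem_powerset.1 hH) disjoint_sdiff
  rw [Icc_eq_image_powerset h, sum_image fun H₁ h₁ H₂ h₂ hH => ?_]
  · rw [sum_congr rfl fun H hH => by rw [union_sdiff_cancel_left (hdisj H hH)]]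
    have := congrArg (Int.cast : ℤ → R) (sum_powerset_neg_one_pow_card (x := U \ S))
    push_cast at this
    rw [this]
    refine if_congr ?_ rfl rfl
    exact sdiff_eq_empty_iff_subset.trans ⟨fun h' => subset_antisymm h h', by rintro rfl; rfl⟩
  · rw [← union_sdiff_cancel_left (hdisj H₁ h₁), ← union_sdiff_cancel_left (hdisj H₂ h₂)]
    exact congrArg (· \ S) hH

lemma sum_Icc_neg_one_pow_card_sdiff_right {S U : Finset α} (h : S ⊆ U) :
    ∑ T ∈ Icc S U, (-1 : R) ^ #(U \ T) = if S = U then 1 else 0 := by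
  have hsplit : ∀ T ∈ Icc S U,
      (-1 : R) ^ #(U \ T) = (-1) ^ #(U \ S) * (-1) ^ #(T \ S) := by
    intro T hT
    obtain ⟨hST, hTU⟩ := mem_Icc.1 hT
    rw [← sdiff_union_sdiff_cancel hTU hST,
      card_union_of_disjoint (disjoint_sdiff_self_left.mono_right sdiff_subset),
      pow_add, mul_assoc, ← sq, neg_one_pow_sq, mul_one]
  rw [sum_congr rfl hsplit, ← mul_sum, sum_Icc_neg_one_pow_card_sdiff_left h]
  split_ifs with hSU <;> simp [hSU]

def lowerMoebius (φ : Finset α → R) (I : Finset α) : R :=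
  ∑ T ∈ Iic I, (-1 : R) ^ #(I \ T) * φ T

lemma sum_Iic_lowerMoebius (φ : Finset α → R) (S : Finset α) :
    ∑ I ∈ Iic S, lowerMoebius φ I = φ S := by
  simp only [lowerMoebius]
  rw [sum_comm' (t' := Iic S) (s' := fun T => Icc T S) fun I T => by
    simp only [mem_Iic, mem_Icc]
    exact ⟨fun h => ⟨⟨h.2, h.1⟩, h.2.trans h.1⟩, fun h => ⟨h.1.2, h.1.1⟩⟩]
  rw [sum_congr rfl fun T hT => by
    rw [← sum_mul, sum_Icc_neg_one_pow_card_sdiff_left (mem_Iic.1 hT)]]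
  simp

end Alternating

section Moebius

variable {n : ℕ}

lemma mob_eq_sum_Ici (w : Finset (Fin n) → ℝ) (T : Finset (Fin n)) :
    mob w T = ∑ R ∈ Ici T, (-1 : ℝ) ^ #(R \ T) * w R := by
  have hdisj : ∀ H ∈ (univ \ T).powerset, Disjoint T H := fun H hH =>
    disjoint_of_subset_right (mem_powerset.1 hH) disjoint_sdiff
  rw [← Icc_top, top_eq_univ, Icc_eq_image_powerset (subset_univ T),
    sum_image fun H₁ h₁ H₂ h₂ hH => ?_, mob]
  · refine sum_congr rfl fun H hH => ?_
    rw [union_sdiff_cancel_left (hdisj H hH), union_comm]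
  · rw [← union_sdiff_cancel_left (hdisj H₁ h₁), ← union_sdiff_cancel_left (hdisj H₂ h₂)]
    exact congrArg (· \ T) hH

lemma sum_Ici_mob (w : Finset (Fin n) → ℝ) (S : Finset (Fin n)) :
    ∑ T ∈ Ici S, mob w T = w S := by
  simp only [mob_eq_sum_Ici]
  rw [sum_comm' (t' := Ici S) (s' := fun R => Icc S R) fun T R => by
    simp only [mem_Ici, mem_Icc]; exact ⟨fun h => ⟨h, h.1.trans h.2⟩, fun h => h.1⟩]
  rw [sum_congr rfl fun R hR => by
    rw [← sum_mul, sum_Icc_neg_one_pow_card_sdiff_right (mem_Ici.1 hR)]]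
  simp

lemma sum_mob (w : Finset (Fin n) → ℝ) : ∑ T, mob w T = w ∅ := by
  rw [← sum_Ici_mob w ∅, ← bot_eq_empty, Ici_bot]

lemma sum_sum_mul_union_eq_sum_mob_mul_sq (w V : Finset (Fin n) → ℝ) :
    ∑ I, ∑ J, V I * w (I ∪ J) * V J = ∑ T, mob w T * (∑ I ∈ Iic T, V I) ^ 2 := by
  have hw : ∀ I J, w (I ∪ J) = ∑ T, if I ⊆ T ∧ J ⊆ T then mob w T else 0 := by
    intro I J
    rw [← sum_Ici_mob w (I ∪ J), ← sum_filter]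
    congr 1; ext T; simp [union_subset_iff]
  have hV : ∀ T, ∑ I ∈ Iic T, V I = ∑ I, if I ⊆ T then V I else 0 := by
    intro T; rw [← sum_filter]; congr 1; ext I; simp
  have hT : ∀ T, mob w T * (∑ I ∈ Iic T, V I) ^ 2
      = ∑ I, ∑ J, if I ⊆ T ∧ J ⊆ T then V I * mob w T * V J else 0 := by
    intro T
    rw [hV, sq, sum_mul_sum, mul_sum]
    refine sum_congr rfl fun I _ => ?_
    rw [mul_sum]
    refine sum_congr rfl fun J _ => ?_
    split_ifs <;> simp_all; ring
  calc ∑ I, ∑ J, V I * w (I ∪ J) * V J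
      = ∑ I, ∑ J, ∑ T, if I ⊆ T ∧ J ⊆ T then V I * mob w T * V J else 0 := by
        simp_rw [hw, mul_sum, sum_mul, mul_ite, ite_mul, mul_zero, zero_mul]
    _ = ∑ I, ∑ T, ∑ J, if I ⊆ T ∧ J ⊆ T then V I * mob w T * V J else 0 :=
        sum_congr rfl fun I _ => sum_comm
    _ = ∑ T, mob w T * (∑ I ∈ Iic T, V I) ^ 2 := by
        rw [sum_comm]; simp_rw [hT]

lemma dotProduct_Mfull_mulVec (w V : Finset (Fin n) → ℝ) :
    star V ⬝ᵥ (Mfull w *ᵥ V) = ∑ T, mob w T * (∑ I ∈ Iic T, V I) ^ 2 := by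
  rw [← sum_sum_mul_union_eq_sum_mob_mul_sq]
  simp [dotProduct, mulVec, Mfull, mul_sum, mul_assoc]

lemma sum_Idx_eq_sum {f : Finset (Fin n) → ℝ} (hf : f univ = 0) :
    ∑ I : Idx n, f I = ∑ I, f I :=
  (sum_subtype (univ.erase univ) (by simp) f).symm.trans (sum_erase univ hf)

lemma dotProduct_Mnm1_mulVec (w V : Finset (Fin n) → ℝ) (hV : V univ = 0) :
    star (fun I : Idx n => V I) ⬝ᵥ (Mnm1 w *ᵥ fun I => V I)
      = ∑ T, mob w T * (∑ I ∈ Iic T, V I) ^ 2 := by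
  rw [← sum_sum_mul_union_eq_sum_mob_mul_sq]
  simp only [dotProduct, mulVec, Mnm1, of_apply, star_trivial]
  rw [sum_Idx_eq_sum (f := fun I => V I * ∑ J : Idx n, w (I ∪ J) * V J) (by simp [hV])]
  refine sum_congr rfl fun I _ => ?_
  rw [sum_Idx_eq_sum (f := fun J => w (I ∪ J) * V J) (by simp [hV]), mul_sum]
  simp only [mul_assoc]

lemma sum_mob_mul_sq_nonneg_of_posSemidef_Mfull {w : Finset (Fin n) → ℝ}
    (h : (Mfull w).PosSemidef) (φ : Finset (Fin n) → ℝ) :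
    0 ≤ ∑ T, mob w T * φ T ^ 2 := by
  simpa only [dotProduct_Mfull_mulVec, sum_Iic_lowerMoebius] using
    h.dotProduct_mulVec_nonneg (lowerMoebius φ)

lemma sum_mob_mul_sq_nonneg_of_posSemidef_Mnm1 {w : Finset (Fin n) → ℝ}
    (h : (Mnm1 w).PosSemidef) (φ : Finset (Fin n) → ℝ)
    (hφ : ∑ T, (-1 : ℝ) ^ #(univ \ T) * φ T = 0) :
    0 ≤ ∑ T, mob w T * φ T ^ 2 := by
  have hV : lowerMoebius φ univ = 0 := by rwa [lowerMoebius, ← top_eq_univ, Iic_top]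
  simpa only [dotProduct_Mnm1_mulVec w _ hV, sum_Iic_lowerMoebius] using
    h.dotProduct_mulVec_nonneg fun I => lowerMoebius φ I

lemma mob_nonneg_of_posSemidef {w : Finset (Fin n) → ℝ} (h : (Mfull w).PosSemidef)
    (K : Finset (Fin n)) : 0 ≤ mob w K := by
  simpa [Pi.single_apply] using sum_mob_mul_sq_nonneg_of_posSemidef_Mfull h (Pi.single K 1)

lemma mob_add_mob_nonneg_of_posSemidef {w : Finset (Fin n) → ℝ} (h : (Mnm1 w).PosSemidef)
    {K₁ K₂ : Finset (Fin n)} (hK : K₁ ≠ K₂) : 0 ≤ mob w K₁ + mob w K₂ := by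
  have he : ∀ K : Finset (Fin n), (-1 : ℝ) ^ #(univ \ K) * (-1) ^ #(univ \ K) = 1 :=
    fun K => by rw [← sq, neg_one_pow_sq]
  have hsum : ∀ f : Finset (Fin n) → ℝ, (∀ T, T ≠ K₁ ∧ T ≠ K₂ → f T = 0) →
      ∑ T, f T = f K₁ + f K₂ :=
    fun f hf => Fintype.sum_eq_add K₁ K₂ hK hf
  have := sum_mob_mul_sq_nonneg_of_posSemidef_Mnm1 h
    (Pi.single K₁ ((-1) ^ #(univ \ K₁)) - Pi.single K₂ ((-1) ^ #(univ \ K₂)))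
    (by rw [hsum _ fun T hT => by simp [hT.1, hT.2]]; simp [hK, hK.symm, he])
  rw [hsum _ fun T hT => by simp [hT.1, hT.2]] at this
  simpa [hK, hK.symm, neg_one_pow_sq] using this

lemma mob_comp_insert (w : Finset (Fin n) → ℝ) (i : Fin n) (K : Finset (Fin n)) :
    mob (fun R => w (insert i R)) K = if i ∈ K then mob w K else 0 := by
  simp only [mob]
  split_ifs with hi
  · exact sum_congr rfl fun H _ => by rw [insert_eq_of_mem (mem_union_right H hi)]
  · have hiD : i ∈ univ \ K := mem_sdiff.2 ⟨mem_univ i, hi⟩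
    rw [← insert_erase hiD, sum_powerset_insert (notMem_erase i _), ← sum_add_distrib]
    refine sum_eq_zero fun H hH => ?_
    have hiH : i ∉ H := fun h => notMem_erase i _ (mem_powerset.1 hH h)
    rw [card_insert_of_notMem hiH, insert_union, insert_idem, pow_succ]
    ring

lemma mob_shiftVec (a : Fin n → ℝ) (b : ℝ) (y : Finset (Fin n) → ℝ) (K : Finset (Fin n)) :
    mob (shiftVec a b y) K = gval a b K * mob y K := by
  have hlin : mob (shiftVec a b y) K
      = ∑ i, a i * mob (fun R => y (insert i R)) K + b * mob y K := by
    simp only [mob, shiftVec, mul_add, sum_add_distrib, mul_sum]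
    rw [sum_comm]
    congr 1 <;> refine sum_congr rfl fun _ _ => ?_
    · exact sum_congr rfl fun _ _ => by ring
    · ring
  simp_rw [hlin, mob_comp_insert, mul_ite, mul_zero]
  rw [sum_ite_mem, univ_inter, ← sum_mul, gval, add_mul]

end Moebius

section Weights

variable {ι : Type*} {p g : ι → ℝ}

lemma le_sum_mul_of_le_of_pos [Fintype ι] (hp : ∀ i, 0 ≤ p i) (hsum : ∑ i, p i = 1)
    {v : ℝ} {f : ι → ℝ} (hf : ∀ i, 0 < p i → v ≤ f i) : v ≤ ∑ i, p i * f i :=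
  calc v = ∑ i, p i * v := by rw [← sum_mul, hsum, one_mul]
    _ ≤ ∑ i, p i * f i := sum_le_sum fun i _ => by
      rcases (hp i).eq_or_lt with h | h
      · simp [← h]
      · exact mul_le_mul_of_nonneg_left (hf i h) h.le

lemma forall_pos_of_pairwise_nonneg (hp : ∀ i, 0 ≤ p i)
    (hpair : Pairwise fun i j => 0 ≤ g i * p i + g j * p j)
    {i₀ : ι} (hpos : 0 < p i₀) (hneg : g i₀ < 0) (i : ι) : 0 < p i := by
  rcases eq_or_ne i i₀ with rfl | hi
  · exact hpos
  · have : 0 < g i * p i := by nlinarith [hpair hi]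
    exact lt_of_le_of_ne (hp i) fun h => by simp [← h] at this

lemma pos_of_pairwise_nonneg (hp : ∀ i, 0 < p i)
    (hpair : Pairwise fun i j => 0 ≤ g i * p i + g j * p j)
    {i j : ι} (hneg : g i < 0) (hj : j ≠ i) : 0 < g j :=
  pos_of_mul_pos_left (by nlinarith [hpair hj, hp i]) (hp j).le

end Weights

theorem gap_implies_svc_constraints_general (n m : ℕ)
    (c : Fin n → ℝ) (c0 : ℝ)
    (a : Fin m → Fin n → ℝ) (b : Fin m → ℝ)
    (hnonred : ∀ ℓ : Fin m, ∃ I : Finset (Fin n), gval (a ℓ) (b ℓ) I < 0)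
    (Istar : Finset (Fin n))
    (hIstar_opt : ∀ I : Finset (Fin n), (∀ ℓ : Fin m, 0 ≤ gval (a ℓ) (b ℓ) I) →
      gval c c0 Istar ≤ gval c c0 I)
    (y : Finset (Fin n) → ℝ)
    (hy0 : y ∅ = 1)
    (hyPSD : (Mfull y).PosSemidef)
    (hyPSDg : ∀ ℓ : Fin m, (Mnm1 (shiftVec (a ℓ) (b ℓ) y)).PosSemidef)
    (hgap : ∑ I : Finset (Fin n), mob y I * gval c c0 I < gval c c0 Istar) :
    ∀ ℓ : Fin m, ∃ I : Finset (Fin n),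
      gval (a ℓ) (b ℓ) I < 0 ∧
      ∀ J : Finset (Fin n), J ≠ I → 0 < gval (a ℓ) (b ℓ) J := by
  have hnonneg : ∀ K, 0 ≤ mob y K := mob_nonneg_of_posSemidef hyPSD
  have hpair : ∀ ℓ, Pairwise fun K₁ K₂ =>
      0 ≤ gval (a ℓ) (b ℓ) K₁ * mob y K₁ + gval (a ℓ) (b ℓ) K₂ * mob y K₂ :=
    fun ℓ K₁ K₂ hK => by
      simpa only [mob_shiftVec] using mob_add_mob_nonneg_of_posSemidef (hyPSDg ℓ) hK
  obtain ⟨K₀, hK₀, ℓ₀, hinfeas⟩ : ∃ K₀, 0 < mob y K₀ ∧ ∃ ℓ₀, gval (a ℓ₀) (b ℓ₀) K₀ < 0 := by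
    by_contra! hfeas
    exact hgap.not_ge <| le_sum_mul_of_le_of_pos hnonneg ((sum_mob y).trans hy0)
      fun K hK => hIstar_opt K (hfeas K hK)
  have hpos := forall_pos_of_pairwise_nonneg hnonneg (hpair ℓ₀) hK₀ hinfeas
  intro ℓ
  obtain ⟨I, hI⟩ := hnonred ℓ
  exact ⟨I, hI, fun J hJ => pos_of_pairwise_nonneg hpos (hpair ℓ) hI hJ⟩

/-- If a 0/1 integer linear program (with `m ≥ 1` non-redundant affine constraints and
an optimal integral feasible point `Istar`) admits a feasible `Las_{n-1}` solution `y`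
of value smaller than the integral optimum, then every constraint is Single Vertex
Cutting: exactly one 0/1 point violates it, and it is strictly positive elsewhere. -/
theorem gap_implies_svc_constraints (n m : ℕ) (hn : 1 ≤ n) (hm : 1 ≤ m)
    (c : Fin n → ℝ) (c0 : ℝ)
    (a : Fin m → Fin n → ℝ) (b : Fin m → ℝ)
    (hnonred : ∀ ℓ : Fin m, ∃ I : Finset (Fin n), gval (a ℓ) (b ℓ) I < 0)
    (Istar : Finset (Fin n))
    (hIstar_feas : ∀ ℓ : Fin m, 0 ≤ gval (a ℓ) (b ℓ) Istar)
    (hIstar_opt : ∀ I : Finset (Fin n), (∀ ℓ : Fin m, 0 ≤ gval (a ℓ) (b ℓ) I) →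
      gval c c0 Istar ≤ gval c c0 I)
    (y : Finset (Fin n) → ℝ)
    (hy0 : y ∅ = 1)
    (hyPSD : (Mfull y).PosSemidef)
    (hyPSDg : ∀ ℓ : Fin m, (Mnm1 (shiftVec (a ℓ) (b ℓ) y)).PosSemidef)
    (hgap : ∑ I : Finset (Fin n), mob y I * gval c c0 I < gval c c0 Istar) :
    ∀ ℓ : Fin m, ∃ I : Finset (Fin n),
      gval (a ℓ) (b ℓ) I < 0 ∧
      ∀ J : Finset (Fin n), J ≠ I → 0 < gval (a ℓ) (b ℓ) J :=
  gap_implies_svc_constraints_general n m c c0 a b hnonred Istar hIstar_opt y hy0 hyPSD hyPSDg hgap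
end

section
/- Let ℙ be the unconstrained 0/1 polynomial optimization problem min{ f(x) : x ∈ {0,1}^n } for a multilinear polynomial f, and let f(x_{I*}) = min_{I⊆N} f(x_I) be its integral optimum. Then the level-(n−1) Lasserre relaxation Las_{n−1}(ℙ) has an integrality gap (i.e., there exists y : P(N) → ℝ with y_∅ = 1, M_{n−1}(y) positive semidefinite, and Σ_{I⊆N} f_I y_I < f(x_{I*})) if and only if there exists a family of reals {y_I^N : I ⊆ N} satisfying: (i) Σ_{I⊆N} y_I^N = 1; (ii) y_K^N < 0 for exactly one K ⊆ N; (iii) y_J^N > 0 for all J ⊆ N with J ≠ K; (iv) Σ_{I⊆N} 1/y_I^N ≤ 0; and (v) Σ_{I⊆N} y_I^N f(x_I) < f(x_{I*}). -/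
open Finset Matrix

/-- Value of the multilinear polynomial with coefficients `c` at the 0/1 point `x_I`:
`f(x_I) = ∑_{S ⊆ I} c S`. -/
def fval {n : ℕ} (c : Finset (Fin n) → ℝ) (I : Finset (Fin n)) : ℝ :=
  ∑ S ∈ I.powerset, c S

/-
Write `y_I = ∑_{S ⊇ I} Y_S`, i.e. `Y = y^N` (Möbius inversion on the Boolean lattice). The
quadratic form of `M_{n-1}(y)` is then `∑_S Y_S (v_S · x)²` with `v_S · x = ∑_{I ⊆ S, I ≠ N} x_I`,
and the vectors `((-1)^{|S|} v_S · x)_S` fill exactly the hyperplane `∑_S w_S = 0`. So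
`M_{n-1}(y) ⪰ 0` says that `∑_S Y_S w_S²` is nonnegative on that hyperplane, and the objective is
`∑_S Y_S f(x_S)`. An integrality gap forces some `Y_K < 0`, and for such `Y` nonnegativity on the
hyperplane is equivalent to `Y_J > 0` for `J ≠ K` together with `∑_S 1 / Y_S ≤ 0`: test the form on
`e_J - e_K` and on `w_S = 1 / Y_S` (`S ≠ K`) for one direction, use Cauchy–Schwarz for the other.
-/

section MoebiusInversion
variable {𝕜 β : Type*} [Field 𝕜] [PartialOrder β] [LocallyFiniteOrder β] [Fintype β]
  [DecidableEq β]

theorem exists_sum_Ici_eq [OrderTop β] (g : β → 𝕜) :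
    ∃ f : β → 𝕜, ∀ x, ∑ y ∈ Ici x, f y = g x := by
  let zeta : (β → 𝕜) →ₗ[𝕜] β → 𝕜 :=
    { toFun f x := ∑ y ∈ Ici x, f y
      map_add' f f' := by ext; simp [sum_add_distrib]
      map_smul' a f := by ext; simp [mul_sum] }
  have hinj : Function.Injective zeta := by
    refine (injective_iff_map_eq_zero zeta).2 fun f hf => funext fun x => ?_
    simpa using
      IncidenceAlgebra.moebius_inversion_top (𝕜 := 𝕜) f 0 (fun x => (congrFun hf x).symm) x
  obtain ⟨f, hf⟩ := LinearMap.injective_iff_surjective.1 hinj g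
  exact ⟨f, congrFun hf⟩

theorem exists_sum_Iic_eq [OrderBot β] (g : β → 𝕜) :
    ∃ f : β → 𝕜, ∀ x, ∑ y ∈ Iic x, f y = g x :=
  exists_sum_Ici_eq (β := βᵒᵈ) g

end MoebiusInversion

section BooleanLattice
variable {α R : Type*} [Fintype α] [DecidableEq α] [CommRing R]

theorem sum_Ici_neg_one_pow_card (I : Finset α) :
    ∑ S ∈ Ici I, (-1 : R) ^ #S = if I = univ then (-1) ^ Fintype.card α else 0 := by
  by_cases hI : I = univ
  · rw [hI, if_pos rfl, ← top_eq_univ, Ici_top, sum_singleton, top_eq_univ, card_univ]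
  have hdisj : ∀ T ∈ (univ \ I).powerset, Disjoint I T := fun T hT =>
    disjoint_sdiff.mono_right (mem_powerset.1 hT)
  have hinj : Set.InjOn (I ∪ ·) ((univ \ I).powerset : Set (Finset α)) := fun T hT T' hT' h => by
    rw [← union_sdiff_cancel_left (hdisj T hT), ← union_sdiff_cancel_left (hdisj T' hT')]
    exact congrArg (· \ I) h
  have hne : (univ \ I).Nonempty := by
    rwa [sdiff_nonempty, ← top_eq_univ, top_le_iff, top_eq_univ]
  rw [Ici_eq_Icc, top_eq_univ, Icc_eq_image_powerset (subset_univ I), sum_image hinj,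
    sum_congr rfl fun T hT => by rw [card_union_of_disjoint (hdisj T hT), pow_add], ← mul_sum,
    if_neg hI]
  have hsum := congrArg (Int.cast : ℤ → R) (sum_powerset_neg_one_pow_card_of_nonempty hne)
  push_cast at hsum
  rw [hsum, mul_zero]

theorem sum_neg_one_pow_card_mul_sum_Iic (x : Finset α → R) :
    ∑ S, (-1 : R) ^ #S * ∑ I ∈ Iic S, x I = (-1) ^ Fintype.card α * x univ := by
  calc ∑ S, (-1 : R) ^ #S * ∑ I ∈ Iic S, x I = ∑ I, x I * ∑ S ∈ Ici I, (-1 : R) ^ #S := by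
        simp_rw [mul_sum]
        exact (sum_comm' fun S I => by simp).trans (sum_congr rfl fun I _ => sum_congr rfl
          fun S _ => mul_comm _ _)
    _ = (-1) ^ Fintype.card α * x univ := by simp [sum_Ici_neg_one_pow_card, mul_comm]

end BooleanLattice

section QuadraticForm
variable {ι : Type*} [Fintype ι] [DecidableEq ι] {Y : ι → ℝ} {K : ι}

theorem pos_and_sum_inv_nonpos_of_quadForm_nonneg (hK : Y K < 0)
    (hq : ∀ w : ι → ℝ, ∑ i, w i = 0 → 0 ≤ ∑ i, Y i * w i ^ 2) :
    (∀ J, J ≠ K → 0 < Y J) ∧ ∑ i, 1 / Y i ≤ 0 := by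
  have hpos : ∀ J, J ≠ K → 0 < Y J := by
    intro J hJK
    have hform : ∑ i, Y i * (Pi.single J 1 - Pi.single K 1 : ι → ℝ) i ^ 2 = Y J + Y K := by
      rw [Fintype.sum_eq_add J K hJK fun i hi => by simp [hi.1, hi.2]]
      simp [hJK, hJK.symm]
    have := hq (Pi.single J 1 - Pi.single K 1) (by simp [sum_sub_distrib])
    linarith
  refine ⟨hpos, ?_⟩
  set σ := ∑ i ∈ univ.erase K, 1 / Y i
  have hσ : 0 ≤ σ := sum_nonneg fun i hi => (one_div_pos.2 (hpos i (ne_of_mem_erase hi))).le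
  set w : ι → ℝ := fun i => if i = K then -σ else 1 / Y i
  have hw : ∀ i ∈ univ.erase K, w i = 1 / Y i := fun i hi => if_neg (ne_of_mem_erase hi)
  have hwsum : ∑ i, w i = 0 := by
    rw [← add_sum_erase _ _ (mem_univ K), sum_congr rfl hw, show w K = -σ from if_pos rfl]
    exact neg_add_cancel σ
  have hform : ∑ i, Y i * w i ^ 2 = Y K * σ ^ 2 + σ := by
    rw [← add_sum_erase _ _ (mem_univ K)]
    congr 1
    · simp [w]
    · refine sum_congr rfl fun i hi => ?_
      rw [hw i hi]
      field_simp [(hpos i (ne_of_mem_erase hi)).ne']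
  have h := hform ▸ hq w hwsum
  rw [← add_sum_erase _ _ (mem_univ K)]
  change 1 / Y K + σ ≤ 0
  have hKinv : Y K * (1 / Y K) = 1 := mul_one_div_cancel hK.ne
  nlinarith [one_div_neg.2 hK]

theorem quadForm_nonneg_of_pos_of_sum_inv_nonpos (hK : Y K < 0) (hpos : ∀ J, J ≠ K → 0 < Y J)
    (hinv : ∑ i, 1 / Y i ≤ 0) (w : ι → ℝ) (hw : ∑ i, w i = 0) :
    0 ≤ ∑ i, Y i * w i ^ 2 := by
  set s := univ.erase K
  have hpos' : ∀ i ∈ s, 0 < Y i := fun i hi => hpos i (ne_of_mem_erase hi)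
  have hwK : w K = -∑ i ∈ s, w i := by
    rw [← add_sum_erase _ _ (mem_univ K)] at hw; linarith
  have hCS : w K ^ 2 ≤ (∑ i ∈ s, 1 / Y i) * ∑ i ∈ s, Y i * w i ^ 2 := by
    rw [hwK, neg_sq]
    refine sum_sq_le_sum_mul_sum_of_sq_le_mul s (fun i hi => (one_div_pos.2 (hpos' i hi)).le)
      (fun i hi => mul_nonneg (hpos' i hi).le (sq_nonneg _)) fun i hi => ?_
    field_simp [(hpos' i hi).ne']
    rfl
  have hσ : ∑ i ∈ s, 1 / Y i ≤ -(1 / Y K) := by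
    rw [← add_sum_erase _ _ (mem_univ K)] at hinv; linarith
  have hT : 0 ≤ ∑ i ∈ s, Y i * w i ^ 2 :=
    sum_nonneg fun i hi => mul_nonneg (hpos' i hi).le (sq_nonneg _)
  have hKinv : Y K * (1 / Y K) = 1 := mul_one_div_cancel hK.ne
  rw [← add_sum_erase _ _ (mem_univ K)]
  nlinarith [mul_le_mul_of_nonneg_right hσ hT]

theorem quadForm_nonneg_on_sum_eq_zero_iff (hK : Y K < 0) :
    (∀ w : ι → ℝ, ∑ i, w i = 0 → 0 ≤ ∑ i, Y i * w i ^ 2) ↔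
      (∀ J, J ≠ K → 0 < Y J) ∧ ∑ i, 1 / Y i ≤ 0 :=
  ⟨pos_and_sum_inv_nonpos_of_quadForm_nonneg hK,
    fun h => quadForm_nonneg_of_pos_of_sum_inv_nonpos hK h.1 h.2⟩

end QuadraticForm

section MomentMatrix
variable {n : ℕ}

def downSum (x : Idx n → ℝ) (S : Finset (Fin n)) : ℝ :=
  ∑ I : Idx n, if I.1 ⊆ S then x I else 0

theorem downSum_eq_sum_Iic {x : Finset (Fin n) → ℝ} (hx : x univ = 0) (S : Finset (Fin n)) :
    downSum (fun I => x I) S = ∑ I ∈ Iic S, x I := by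
  have hsub : ∑ I ∈ univ.erase univ, (if I ⊆ S then x I else 0) =
      ∑ I : Idx n, if I.1 ⊆ S then x I else 0 := sum_subtype _ (by simp) _
  rw [downSum, ← hsub, sum_erase _ (by simp [hx]), ← sum_filter]
  congr 1; ext; simp

theorem exists_eq_downSum (x : Idx n → ℝ) :
    ∃ x' : Finset (Fin n) → ℝ, x' univ = 0 ∧ ∀ S, downSum x S = ∑ I ∈ Iic S, x' I := by
  refine ⟨fun I => if h : I = univ then 0 else x ⟨I, h⟩, dif_pos rfl, fun S => ?_⟩
  rw [← downSum_eq_sum_Iic (dif_pos rfl)]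
  congr 1
  funext I
  rw [dif_neg I.2]

theorem sum_neg_one_pow_card_mul_downSum (x : Idx n → ℝ) :
    ∑ S, (-1 : ℝ) ^ #S * downSum x S = 0 := by
  obtain ⟨x', hx', hx⟩ := exists_eq_downSum x
  simp_rw [hx, sum_neg_one_pow_card_mul_sum_Iic, hx', mul_zero]

theorem exists_downSum_eq (u : Finset (Fin n) → ℝ) (hu : ∑ S, (-1 : ℝ) ^ #S * u S = 0) :
    ∃ x : Idx n → ℝ, ∀ S, downSum x S = u S := by
  obtain ⟨x', hx'⟩ := exists_sum_Iic_eq u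
  have hx'univ : x' univ = 0 := by
    simpa [← hx', sum_neg_one_pow_card_mul_sum_Iic] using hu
  exact ⟨fun I => x' I, fun S => (downSum_eq_sum_Iic hx'univ S).trans (hx' S)⟩

theorem isHermitian_Mnm1 (y : Finset (Fin n) → ℝ) : (Mnm1 y).IsHermitian := by
  ext I J
  simp [Mnm1, union_comm]

theorem dotProduct_mulVec_Mnm1 (Y : Finset (Fin n) → ℝ) (x : Idx n → ℝ) :
    x ⬝ᵥ Mnm1 (fun I => ∑ S ∈ Ici I, Y S) *ᵥ x = ∑ S, Y S * downSum x S ^ 2 := by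
  have hIci : ∀ I : Finset (Fin n), Ici I = univ.filter (I ⊆ ·) := fun I => by ext; simp
  simp only [dotProduct, mulVec, Mnm1, of_apply, downSum, hIci, sum_filter, sq, sum_mul,
    mul_sum, union_subset_iff]
  rw [sum_congr rfl fun I _ => sum_comm, sum_comm]
  refine sum_congr rfl fun S _ => sum_comm.trans <| sum_congr rfl fun I _ => sum_congr rfl
    fun J _ => ?_
  split_ifs <;> simp_all [mul_left_comm]

theorem posSemidef_Mnm1_iff (Y : Finset (Fin n) → ℝ) :
    (Mnm1 (fun I => ∑ S ∈ Ici I, Y S)).PosSemidef ↔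
      ∀ w : Finset (Fin n) → ℝ, ∑ S, w S = 0 → 0 ≤ ∑ S, Y S * w S ^ 2 := by
  have hsq : ∀ (S : Finset (Fin n)) (a : ℝ), ((-1) ^ #S * a) ^ 2 = a ^ 2 := fun S a => by
    rw [mul_pow, ← pow_mul, pow_mul', neg_one_sq, one_pow, one_mul]
  rw [posSemidef_iff_dotProduct_mulVec, and_iff_right (isHermitian_Mnm1 _)]
  simp only [star_trivial, dotProduct_mulVec_Mnm1]
  constructor
  · intro h w hw
    obtain ⟨x, hx⟩ := exists_downSum_eq (fun S => (-1) ^ #S * w S) (by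
      simpa [← mul_assoc, ← mul_pow] using hw)
    simpa [hx, hsq] using h x
  · intro h x
    simpa [hsq] using h (fun S => (-1) ^ #S * downSum x S) (sum_neg_one_pow_card_mul_downSum x)

theorem sum_mul_sum_Ici_eq (c Y : Finset (Fin n) → ℝ) :
    ∑ I, c I * ∑ S ∈ Ici I, Y S = ∑ S, Y S * fval c S := by
  simp_rw [fval, ← Iic_eq_powerset, mul_sum]
  exact (sum_comm' fun I S => by simp).trans (sum_congr rfl fun S _ => sum_congr rfl
    fun I _ => mul_comm _ _)

end MomentMatrix

theorem unconstrained_gap_iff_general (n : ℕ)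
    (c : Finset (Fin n) → ℝ)
    (Istar : Finset (Fin n))
    (hIstar : ∀ I : Finset (Fin n), fval c Istar ≤ fval c I) :
    (∃ y : Finset (Fin n) → ℝ,
        y ∅ = 1 ∧
        (Mnm1 y).PosSemidef ∧
        (∑ I : Finset (Fin n), c I * y I) < fval c Istar)
      ↔ (∃ Y : Finset (Fin n) → ℝ,
          (∑ I : Finset (Fin n), Y I = 1) ∧
          (∃ K : Finset (Fin n), Y K < 0 ∧
            ∀ J : Finset (Fin n), J ≠ K → 0 < Y J) ∧
          (∑ I : Finset (Fin n), 1 / Y I ≤ 0) ∧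
          (∑ I : Finset (Fin n), Y I * fval c I) < fval c Istar) := by
  have hIci_empty (Y : Finset (Fin n) → ℝ) : ∑ S ∈ Ici ∅, Y S = ∑ S, Y S := by
    rw [← bot_eq_empty, Ici_bot]
  constructor
  · rintro ⟨y, hy0, hpsd, hgap⟩
    obtain ⟨Y, hY⟩ := exists_sum_Ici_eq y
    obtain rfl : (fun I => ∑ S ∈ Ici I, Y S) = y := funext hY
    rw [sum_mul_sum_Ici_eq] at hgap
    replace hy0 : ∑ S, Y S = 1 := (hIci_empty Y).symm.trans hy0
    obtain ⟨K, hK⟩ : ∃ K, Y K < 0 := by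
      by_contra! hY
      refine hgap.not_ge ?_
      calc fval c Istar = ∑ S, Y S * fval c Istar := by rw [← sum_mul, hy0, one_mul]
        _ ≤ ∑ S, Y S * fval c S :=
          sum_le_sum fun S _ => mul_le_mul_of_nonneg_left (hIstar S) (hY S)
    obtain ⟨hpos, hinv⟩ :=
      (quadForm_nonneg_on_sum_eq_zero_iff hK).1 ((posSemidef_Mnm1_iff Y).1 hpsd)
    exact ⟨Y, hy0, ⟨K, hK, hpos⟩, hinv, hgap⟩
  · rintro ⟨Y, hsum, ⟨K, hK, hpos⟩, hinv, hgap⟩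
    refine ⟨fun I => ∑ S ∈ Ici I, Y S, (hIci_empty Y).trans hsum, ?_, by rwa [sum_mul_sum_Ici_eq]⟩
    exact (posSemidef_Mnm1_iff Y).2 ((quadForm_nonneg_on_sum_eq_zero_iff hK).2 ⟨hpos, hinv⟩)

/-- Characterization of integrality gaps at level `n-1` for unconstrained 0/1
polynomial optimization: the multilinear objective has coefficients `c`, and
`Istar` is an integral optimum. -/
theorem unconstrained_gap_iff (n : ℕ) (hn : 1 ≤ n)
    (c : Finset (Fin n) → ℝ)
    (Istar : Finset (Fin n))
    (hIstar : ∀ I : Finset (Fin n), fval c Istar ≤ fval c I) :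
    (∃ y : Finset (Fin n) → ℝ,
        y ∅ = 1 ∧
        (Mnm1 y).PosSemidef ∧
        (∑ I : Finset (Fin n), c I * y I) < fval c Istar)
      ↔ (∃ Y : Finset (Fin n) → ℝ,
          (∑ I : Finset (Fin n), Y I = 1) ∧
          (∃ K : Finset (Fin n), Y K < 0 ∧
            ∀ J : Finset (Fin n), J ≠ K → 0 < Y J) ∧
          (∑ I : Finset (Fin n), 1 / Y I ≤ 0) ∧
          (∑ I : Finset (Fin n), Y I * fval c I) < fval c Istar) :=
  unconstrained_gap_iff_general n c Istar hIstar
end
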